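/- arXiv:0908.2458 — 4 statements merged into one kernel-verified Lean document; each statement's English description precedes it below -/
import Mathlib

section
/- Let $T$ be a semistandard tableau of shape $(c^r)$ with entries in $\{2, \ldots, m\}$ (i.e., no entry equals 1), in which the maximal entry $m$ appears. Remove one appearance of $m$ (the leftmost cell containing $m$ in its row), and apply jeu-de-taquin to slide the resulting empty cell to the upper-left corner $(1,1)$; then filling the cell $(1,1)$ with $1$ yields a semistandard tableau of shape $(c^r)$. -/
/-- Well-definedness of the sliding operator ρ on a rectangular semistandard
tableau with no entry equal to 1.  `T : ℕ → ℕ → ℕ` is a semistandard filling of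
the `r × c` rectangle (0-based coordinates) with entries in `{2,…,m}` in which
`m` appears.  `path` is the jeu-de-taquin sliding route of the empty cell,
starting at the removed appearance of `m` (the leftmost cell containing `m` in
its row) and ending at the corner `(0,0)`, following the Schützenberger rule:
the hole moves up when the upper neighbor is ≥ the left neighbor, and left
otherwise.  `T'` is the resulting filling (entries shifted along the path, `1`
placed at `(0,0)`).  Then `T'` is semistandard with entries in `{1,…,m}`. -/
theorem rho_well_defined (r c m : ℕ) (hr : 0 < r) (hc : 0 < c)
    (T T' : ℕ → ℕ → ℕ)
    (hrow : ∀ i j j', i < r → j ≤ j' → j' < c → T i j ≤ T i j')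
    (hcol : ∀ i i' j, i < i' → i' < r → j < c → T i j < T i' j)
    (hlo : ∀ i j, i < r → j < c → 2 ≤ T i j)
    (hhi : ∀ i j, i < r → j < c → T i j ≤ m)
    (path : ℕ → ℕ × ℕ) (L : ℕ)
    (hvalid : ∀ t, t ≤ L → (path t).1 < r ∧ (path t).2 < c)
    (hstart : T (path 0).1 (path 0).2 = m)
    (hstartleft : ∀ j, j < (path 0).2 → T (path 0).1 j ≠ m)
    (hend : path L = (0, 0))
    (hnotend : ∀ t, t < L → path t ≠ (0, 0))
    (hstep : ∀ t, t < L →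
      ((path t).2 = 0 ∧ path (t + 1) = ((path t).1 - 1, (path t).2)) ∨
      ((path t).1 = 0 ∧ path (t + 1) = ((path t).1, (path t).2 - 1)) ∨
      (0 < (path t).1 ∧ 0 < (path t).2 ∧
        T (path t).1 ((path t).2 - 1) ≤ T ((path t).1 - 1) (path t).2 ∧
        path (t + 1) = ((path t).1 - 1, (path t).2)) ∨
      (0 < (path t).1 ∧ 0 < (path t).2 ∧
        T ((path t).1 - 1) (path t).2 < T (path t).1 ((path t).2 - 1) ∧
        path (t + 1) = ((path t).1, (path t).2 - 1)))
    (hT'path : ∀ t, t < L →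
      T' (path t).1 (path t).2 = T (path (t + 1)).1 (path (t + 1)).2)
    (hT'corner : T' 0 0 = 1)
    (hT'rest : ∀ i j, i < r → j < c → (∀ t, t ≤ L → path t ≠ (i, j)) →
      T' i j = T i j) :
    (∀ i j j', i < r → j ≤ j' → j' < c → T' i j ≤ T' i j') ∧
    (∀ i i' j, i < i' → i' < r → j < c → T' i j < T' i' j) ∧
    (∀ i j, i < r → j < c → 1 ≤ T' i j ∧ T' i j ≤ m) := by
  clear hstart hstartleft
  have hm2 : 2 ≤ m := le_trans (hlo 0 0 hr hc) (hhi 0 0 hr hc)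
  -- at any non-final time, the hole is not at the origin
  have hne : ∀ t, t < L → 0 < (path t).1 ∨ 0 < (path t).2 := by
    intro t ht
    have h := hnotend t ht
    rcases Nat.eq_zero_or_pos (path t).1 with h1 | h1
    · rcases Nat.eq_zero_or_pos (path t).2 with h2 | h2
      · exact absurd (Prod.ext h1 h2) h
      · exact Or.inr h2
    · exact Or.inl h1
  -- each step moves up (row > 0) or left (col > 0)
  have step' : ∀ t, t < L →
      (0 < (path t).1 ∧ path (t+1) = ((path t).1 - 1, (path t).2)) ∨
      (0 < (path t).2 ∧ path (t+1) = ((path t).1, (path t).2 - 1)) := by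
    intro t ht
    rcases hstep t ht with ⟨h0, he⟩ | ⟨h0, he⟩ | ⟨h1, _, _, he⟩ | ⟨_, h2, _, he⟩
    · left; refine ⟨?_, he⟩
      rcases hne t ht with h | h
      · exact h
      · omega
    · right; refine ⟨?_, he⟩
      rcases hne t ht with h | h
      · omega
      · exact h
    · exact Or.inl ⟨h1, he⟩
    · exact Or.inr ⟨h2, he⟩
  -- the coordinate-sum decreases by exactly one at each step
  have hsum : ∀ t, t ≤ L → (path t).1 + (path t).2 + t = (path 0).1 + (path 0).2 := by
    intro t ht
    induction t with
    | zero => simp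
    | succ n ih =>
      have hn : n < L := lt_of_lt_of_le (Nat.lt_succ_self n) ht
      have ihn := ih (le_of_lt hn)
      rcases step' n hn with ⟨h1, he⟩ | ⟨h2, he⟩
      · rw [he]; simp only []; omega
      · rw [he]; simp only []; omega
  -- a cell whose sum is one less than the current hole's sum can only be visited next
  have notpath : ∀ i j t, t < L → (path t).1 + (path t).2 = i + j + 1 →
      path (t+1) ≠ (i, j) → ∀ s, s ≤ L → path s ≠ (i, j) := by
    intro i j t ht hsumt hne1 s hs hps
    have h1 := hsum s hs
    have h2 := hsum t (le_of_lt ht)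
    rw [hps] at h1
    simp only [] at h1
    have hst : s = t + 1 := by omega
    rw [hst] at hps
    exact hne1 hps
  -- value transport along the path
  have key : ∀ t, t < L → ∀ a b a' b', path t = (a, b) → path (t+1) = (a', b') →
      T' a b = T a' b' := by
    intro t ht a b a' b' h1 h2
    have h := hT'path t ht
    rw [h1, h2] at h
    simpa using h
  -- horizontal adjacency
  have Hadj : ∀ i j, i < r → j + 1 < c → T' i j ≤ T' i (j + 1) := by
    intro i j hi hj
    have hjc : j < c := by omega
    by_cases hR : ∃ s, s ≤ L ∧ path s = (i, j + 1)
    · obtain ⟨t, htL, hpt⟩ := hR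
      have htL' : t < L := by
        rcases Nat.lt_or_ge t L with h | h
        · exact h
        · exfalso
          have : t = L := le_antisymm htL h
          rw [this, hend] at hpt
          have := congrArg Prod.snd hpt
          simp at this
      have hsumt : (path t).1 + (path t).2 = i + (j + 1) := by rw [hpt]
      rcases hstep t htL' with ⟨h0, _⟩ | ⟨h0, he⟩ | ⟨h1, h2, hcmp, he⟩ | ⟨h1, h2, hcmp, he⟩
      · -- col = 0 : impossible since col = j+1
        exfalso; rw [hpt] at h0; simp at h0
      · -- row 0, left move: hole moves to (i, j)
        rw [hpt] at he h0; simp at he h0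
        -- he : path (t+1) = (i, j)
        rcases Nat.lt_or_ge (t+1) L with hL2 | hL2
        · -- next value comes from above or left of (i,j)
          have hQ := key t htL' i (j+1) i j hpt he
          rcases step' (t+1) hL2 with ⟨hp, he2⟩ | ⟨hp, he2⟩
          · rw [he] at he2 hp; simp at he2 hp
            have hQ2 := key (t+1) hL2 i j (i-1) j he he2
            rw [hQ, hQ2]
            exact le_of_lt (hcol (i-1) i j (by omega) hi hjc)
          · rw [he] at he2 hp; simp at he2 hp
            have hQ2 := key (t+1) hL2 i j i (j-1) he he2
            rw [hQ, hQ2]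
            exact hrow i (j-1) j hi (by omega) hjc
        · -- (i,j) is the origin
          have hteq : t + 1 = L := le_antisymm (by omega) hL2
          rw [hteq, hend] at he
          have e1 := congrArg Prod.fst he
          have e2 := congrArg Prod.snd he
          simp at e1 e2
          have hQ := key t htL' i (j+1) i j hpt (by rw [hteq, hend]; exact he)
          subst e1; subst e2
          rw [hT'corner, hQ]
          exact le_trans (by norm_num) (hlo 0 0 hr hc)
      · -- up move with comparison T i j ≤ T (i-1) (j+1)
        rw [hpt] at he hcmp; simp at he hcmp
        have hQ := key t htL' i (j+1) (i-1) (j+1) hpt he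
        have hnp : ∀ s, s ≤ L → path s ≠ (i, j) := by
          refine notpath i j t htL' (by omega) ?_
          rw [he]
          intro h
          have := congrArg Prod.snd h
          simp at this
        rw [hQ, hT'rest i j hi hjc (fun s hs => hnp s hs)]
        exact hcmp
      · -- left move: hole moves to (i, j)
        rw [hpt] at he; simp at he
        rcases Nat.lt_or_ge (t+1) L with hL2 | hL2
        · have hQ := key t htL' i (j+1) i j hpt he
          rcases step' (t+1) hL2 with ⟨hp, he2⟩ | ⟨hp, he2⟩
          · rw [he] at he2 hp; simp at he2 hp
            have hQ2 := key (t+1) hL2 i j (i-1) j he he2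
            rw [hQ, hQ2]
            exact le_of_lt (hcol (i-1) i j (by omega) hi hjc)
          · rw [he] at he2 hp; simp at he2 hp
            have hQ2 := key (t+1) hL2 i j i (j-1) he he2
            rw [hQ, hQ2]
            exact hrow i (j-1) j hi (by omega) hjc
        · have hteq : t + 1 = L := le_antisymm (by omega) hL2
          rw [hteq, hend] at he
          have e1 := congrArg Prod.fst he
          have e2 := congrArg Prod.snd he
          simp at e1 e2
          have hQ := key t htL' i (j+1) i j hpt (by rw [hteq, hend]; exact he)
          subst e1; subst e2
          rw [hT'corner, hQ]
          exact le_trans (by norm_num) (hlo 0 0 hr hc)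
    · -- right cell not on the path
      push_neg at hR
      have hTr : T' i (j+1) = T i (j+1) :=
        hT'rest i (j+1) hi hj (fun s hs => hR s hs)
      rw [hTr]
      by_cases hLft : ∃ s, s ≤ L ∧ path s = (i, j)
      · obtain ⟨s, hsL, hps⟩ := hLft
        rcases Nat.lt_or_ge s L with hs' | hs'
        · rcases step' s hs' with ⟨hp, he⟩ | ⟨hp, he⟩
          · rw [hps] at he hp; simp at he hp
            have hQ := key s hs' i j (i-1) j hps he
            rw [hQ]
            exact le_trans (le_of_lt (hcol (i-1) i j (by omega) hi hjc))
              (hrow i j (j+1) hi (by omega) hj)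
          · rw [hps] at he hp; simp at he hp
            have hQ := key s hs' i j i (j-1) hps he
            rw [hQ]
            exact le_trans (hrow i (j-1) j hi (by omega) hjc)
              (hrow i j (j+1) hi (by omega) hj)
        · have hseq : s = L := le_antisymm hsL hs'
          rw [hseq, hend] at hps
          have e1 := congrArg Prod.fst hps
          have e2 := congrArg Prod.snd hps
          simp at e1 e2
          subst e1; subst e2
          rw [hT'corner]
          exact le_trans (by norm_num) (hlo 0 (0+1) hr hj)
      · push_neg at hLft
        rw [hT'rest i j hi hjc (fun s hs => hLft s hs)]
        exact hrow i j (j+1) hi (by omega) hj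
  -- vertical adjacency
  have Vadj : ∀ i j, i + 1 < r → j < c → T' i j < T' (i+1) j := by
    intro i j hi hj
    have hir : i < r := by omega
    by_cases hB : ∃ s, s ≤ L ∧ path s = (i + 1, j)
    · obtain ⟨t, htL, hpt⟩ := hB
      have htL' : t < L := by
        rcases Nat.lt_or_ge t L with h | h
        · exact h
        · exfalso
          have : t = L := le_antisymm htL h
          rw [this, hend] at hpt
          have := congrArg Prod.fst hpt
          simp at this
      -- analyze the step from (i+1, j)
      have hup : (path (t+1) = (i, j) ∧ (j = 0 ∨ T (i+1) (j-1) ≤ T i j)) ∨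
          (path (t+1) = (i+1, j-1) ∧ 0 < j ∧ T i j < T (i+1) (j-1)) := by
        rcases hstep t htL' with ⟨h0, he⟩ | ⟨h0, he⟩ | ⟨h1, h2, hcmp, he⟩ | ⟨h1, h2, hcmp, he⟩
        · rw [hpt] at h0 he; simp at h0 he
          subst h0
          exact Or.inl ⟨he, Or.inl rfl⟩
        · exfalso; rw [hpt] at h0; simp at h0
        · rw [hpt] at h2 hcmp he; simp at h2 hcmp he
          exact Or.inl ⟨he, Or.inr hcmp⟩
        · rw [hpt] at h2 hcmp he; simp at h2 hcmp he
          exact Or.inr ⟨he, h2, hcmp⟩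
      rcases hup with ⟨he, hcond⟩ | ⟨he, hjpos, hcmp⟩
      · -- up move: T' (i+1) j = T i j
        have hQ := key t htL' (i+1) j i j hpt he
        rw [hQ]
        rcases Nat.lt_or_ge (t+1) L with hL2 | hL2
        · rcases step' (t+1) hL2 with ⟨hp, he2⟩ | ⟨hp, he2⟩
          · rw [he] at he2 hp; simp at he2 hp
            have hQ2 := key (t+1) hL2 i j (i-1) j he he2
            rw [hQ2]
            exact hcol (i-1) i j (by omega) hir hj
          · rw [he] at he2 hp; simp at he2 hp
            have hQ2 := key (t+1) hL2 i j i (j-1) he he2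
            rw [hQ2]
            rcases hcond with h0 | hcmp
            · omega
            · exact lt_of_lt_of_le (hcol i (i+1) (j-1) (by omega) hi (by omega)) hcmp
        · have hteq : t + 1 = L := le_antisymm (by omega) hL2
          rw [hteq, hend] at he
          have e1 := congrArg Prod.fst he
          have e2 := congrArg Prod.snd he
          simp at e1 e2
          subst e1; subst e2
          rw [hT'corner]
          have := hlo 0 0 hr hc
          omega
      · -- left move: T' (i+1) j = T (i+1) (j-1), and (i,j) is off the path
        have hQ := key t htL' (i+1) j (i+1) (j-1) hpt he
        have hsumt : (path t).1 + (path t).2 = i + j + 1 := by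
          rw [hpt]; simp only []; omega
        have hnp : ∀ s, s ≤ L → path s ≠ (i, j) := by
          refine notpath i j t htL' hsumt ?_
          rw [he]
          intro h
          have := congrArg Prod.fst h
          simp at this
        rw [hQ, hT'rest i j hir hj (fun s hs => hnp s hs)]
        exact hcmp
    · -- bottom cell not on the path
      push_neg at hB
      have hTb : T' (i+1) j = T (i+1) j :=
        hT'rest (i+1) j hi hj (fun s hs => hB s hs)
      rw [hTb]
      by_cases hTop : ∃ s, s ≤ L ∧ path s = (i, j)
      · obtain ⟨s, hsL, hps⟩ := hTop
        rcases Nat.lt_or_ge s L with hs' | hs'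
        · rcases step' s hs' with ⟨hp, he⟩ | ⟨hp, he⟩
          · rw [hps] at he hp; simp at he hp
            have hQ := key s hs' i j (i-1) j hps he
            rw [hQ]
            exact lt_trans (hcol (i-1) i j (by omega) hir hj) (hcol i (i+1) j (by omega) hi hj)
          · rw [hps] at he hp; simp at he hp
            have hQ := key s hs' i j i (j-1) hps he
            rw [hQ]
            exact lt_of_lt_of_le (hcol i (i+1) (j-1) (by omega) hi (by omega))
              (hrow (i+1) (j-1) j hi (by omega) hj)
        · have hseq : s = L := le_antisymm hsL hs'
          rw [hseq, hend] at hps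
          have e1 := congrArg Prod.fst hps
          have e2 := congrArg Prod.snd hps
          simp at e1 e2
          subst e1; subst e2
          rw [hT'corner]
          have := hlo (0+1) 0 hi hj
          omega
      · push_neg at hTop
        rw [hT'rest i j hir hj (fun s hs => hTop s hs)]
        exact hcol i (i+1) j (by omega) hi hj
  -- chain the adjacency lemmas
  have Hgen : ∀ i j j', i < r → j ≤ j' → j' < c → T' i j ≤ T' i j' := by
    intro i j j' hi hjj hj'
    obtain ⟨d, rfl⟩ := Nat.exists_eq_add_of_le hjj
    clear hjj
    induction d with
    | zero => simp
    | succ n ih =>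
      exact le_trans (ih (by omega)) (Hadj i (j+n) hi (by omega))
  have Vgen : ∀ d i j, i + d < r → j < c → 0 < d → T' i j < T' (i + d) j := by
    intro d
    induction d with
    | zero => intro i j _ _ h; omega
    | succ n ih =>
      intro i j hir hj _
      rcases Nat.eq_zero_or_pos n with h | h
      · subst h; exact Vadj i j (by omega) hj
      · exact lt_trans (ih i j (by omega) hj h) (Vadj (i+n) j (by omega) hj)
  have bounds : ∀ i j, i < r → j < c → 1 ≤ T' i j ∧ T' i j ≤ m := by
    intro i j hi hj
    by_cases hp : ∃ s, s ≤ L ∧ path s = (i, j)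
    · obtain ⟨t, htL, hpt⟩ := hp
      rcases Nat.lt_or_ge t L with ht | ht
      · have hv := hvalid (t+1) (by omega)
        have hQ := key t ht i j (path (t+1)).1 (path (t+1)).2 hpt rfl
        rw [hQ]
        constructor
        · exact le_trans (by norm_num) (hlo _ _ hv.1 hv.2)
        · exact hhi _ _ hv.1 hv.2
      · have hteq : t = L := le_antisymm htL ht
        rw [hteq, hend] at hpt
        have e1 := congrArg Prod.fst hpt
        have e2 := congrArg Prod.snd hpt
        simp at e1 e2
        rw [← e1, ← e2, hT'corner]
        omega
    · push_neg at hp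
      rw [hT'rest i j hi hj (fun s hs => hp s hs)]
      have := hlo i j hi hj
      have := hhi i j hi hj
      omega
  refine ⟨Hgen, ?_, bounds⟩
  intro i i' j hii hi' hj
  obtain ⟨d, rfl⟩ := Nat.exists_eq_add_of_le (le_of_lt hii)
  exact Vgen d i j hi' hj (by omega)
end

section
/- Let $T$ be a semistandard Young tableau of rectangular shape $(c^r)$ over $\{1, \ldots, n+2\}$ containing at least one entry equal to $n+2$, such that applying the sliding operator $\rho$ (remove one $n+2$, jeu-de-taquin slide to the corner, fill with $1$) yields a valid semistandard tableau. Let $SR$ denote the sliding route (the sequence of cells traversed by the empty box, from the removed cell in the bottom-right region to cell $(1,1)$). For each $k \in \{1, \ldots, n+1\}$ let $\Psi(T)^{(k)} = \{(i,j) : i \leq k, T(i,j) > k\}$. Then $SR$ intersects $\Psi(T)^{(k)}$ for every $k$, and if $(i_k, j_k)$ is the last cell of $SR$ (in the order of the slide, toward $(1,1)$) that lies in $\Psi(T)^{(k)}$, then $(i_k, j_k)$ is an upper-left (inner) corner of the rotated-Young-diagram region $\Psi(T)^{(k)}$, and furthermore $i_k \leq k$. -/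
/-- Membership of a cell (0-based) in the region
`Ψ(T)^{(k)} = {(i,j) : i ≤ k (1-based), T(i,j) > k}`. -/
def psiMem (T : ℕ → ℕ → ℕ) (k : ℕ) (x : ℕ × ℕ) : Prop :=
  x.1 + 1 ≤ k ∧ k < T x.1 x.2

/-- The sliding route lemma of Base Case 1 (Section 7.2): for a rectangular
SSYT `T` over `{1,…,n+2}` in the domain of ρ (entries strictly exceed the
1-based row index), with jeu-de-taquin sliding route `path` from the removed
appearance of `n+2` to the corner `(0,0)`, the route meets every region
`Ψ(T)^{(k)}` for `k ∈ {1,…,n+1}`, and the last cell `(i_k, j_k)` of the route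
lying in `Ψ(T)^{(k)}` is an upper-left corner of that rotated Young diagram,
with `i_k ≤ k`. -/
theorem sliding_route_meets_psi (n r c : ℕ) (hr : 0 < r) (hc : 0 < c)
    (T : ℕ → ℕ → ℕ)
    (hrow : ∀ i j j', i < r → j ≤ j' → j' < c → T i j ≤ T i j')
    (hcol : ∀ i i' j, i < i' → i' < r → j < c → T i j < T i' j)
    (hdom : ∀ i j, i < r → j < c → i + 2 ≤ T i j)
    (hhi : ∀ i j, i < r → j < c → T i j ≤ n + 2)
    (hm : ∃ i j, i < r ∧ j < c ∧ T i j = n + 2)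
    (path : ℕ → ℕ × ℕ) (L : ℕ)
    (hvalid : ∀ t, t ≤ L → (path t).1 < r ∧ (path t).2 < c)
    (hstart : T (path 0).1 (path 0).2 = n + 2)
    (hstartleft : ∀ j, j < (path 0).2 → T (path 0).1 j ≠ n + 2)
    (hend : path L = (0, 0))
    (hnotend : ∀ t, t < L → path t ≠ (0, 0))
    (hstep : ∀ t, t < L →
      ((path t).2 = 0 ∧ path (t + 1) = ((path t).1 - 1, (path t).2)) ∨
      ((path t).1 = 0 ∧ path (t + 1) = ((path t).1, (path t).2 - 1)) ∨
      (0 < (path t).1 ∧ 0 < (path t).2 ∧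
        T (path t).1 ((path t).2 - 1) ≤ T ((path t).1 - 1) (path t).2 ∧
        path (t + 1) = ((path t).1 - 1, (path t).2)) ∨
      (0 < (path t).1 ∧ 0 < (path t).2 ∧
        T ((path t).1 - 1) (path t).2 < T (path t).1 ((path t).2 - 1) ∧
        path (t + 1) = ((path t).1, (path t).2 - 1))) :
    ∀ k, 1 ≤ k → k ≤ n + 1 →
      (∃ t, t ≤ L ∧ psiMem T k (path t)) ∧
      (∀ t, t ≤ L → psiMem T k (path t) →
        (∀ t', t < t' → t' ≤ L → ¬ psiMem T k (path t')) →
        (path t).1 + 1 ≤ k ∧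
        ((path t).1 = 0 ∨ ¬ psiMem T k ((path t).1 - 1, (path t).2)) ∧
        ((path t).2 = 0 ∨ ¬ psiMem T k ((path t).1, (path t).2 - 1))) := by
  intro k hk1 hk2
  constructor
  · -- existence: take the last time the entry exceeds k
    set P : ℕ → Prop := fun t => k < T (path t).1 (path t).2 with hP
    have hP0 : P 0 := by simp only [hP]; omega
    set t0 := Nat.findGreatest P L with ht0
    have ht0le : t0 ≤ L := Nat.findGreatest_le L
    have ht0P : P t0 := Nat.findGreatest_spec (Nat.zero_le L) hP0
    refine ⟨t0, ht0le, ?_, ht0P⟩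
    -- show (path t0).1 + 1 ≤ k
    rcases eq_or_lt_of_le ht0le with heq | hlt
    · rw [heq, hend]; omega
    · have hnP : ¬ P (t0 + 1) :=
        Nat.findGreatest_is_greatest (Nat.lt_succ_self t0) hlt
      have hT1 : T (path (t0+1)).1 (path (t0+1)).2 ≤ k := by
        simp only [hP] at hnP; omega
      have hv1 := hvalid (t0+1) hlt
      have hd1 := hdom _ _ hv1.1 hv1.2
      rcases hstep t0 hlt with ⟨_, he⟩ | ⟨_, he⟩ | ⟨_, _, _, he⟩ | ⟨_, _, _, he⟩ <;>
        rw [he] at hd1 hT1 <;> simp at hd1 hT1 <;> omega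
  · intro t ht hmem hafter
    obtain ⟨hrowle, hTk⟩ := hmem
    refine ⟨hrowle, ?_, ?_⟩
    · -- upper neighbor not in Ψ
      rcases Nat.eq_or_lt_of_le ht with heq | hlt
      · left; rw [heq, hend]
      · by_cases hi : (path t).1 = 0
        · left; exact hi
        · right
          rintro ⟨h1, h2⟩
          simp only at h1 h2
          have hnext := hafter (t+1) (Nat.lt_succ_self t) hlt
          rcases hstep t hlt with ⟨_, he⟩ | ⟨hi0, _⟩ | ⟨_, _, _, he⟩ | ⟨_, _, hlt4, he⟩
          · exact hnext (by rw [he]; exact ⟨by omega, h2⟩)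
          · exact hi hi0
          · exact hnext (by rw [he]; exact ⟨by omega, h2⟩)
          · exact hnext (by rw [he]; simp only [psiMem, Prod.fst, Prod.snd]; omega)
    · -- left neighbor not in Ψ
      rcases Nat.eq_or_lt_of_le ht with heq | hlt
      · left; rw [heq, hend]
      · by_cases hj : (path t).2 = 0
        · left; exact hj
        · right
          rintro ⟨h1, h2⟩
          simp only at h1 h2
          have hnext := hafter (t+1) (Nat.lt_succ_self t) hlt
          rcases hstep t hlt with ⟨hj0, _⟩ | ⟨_, he⟩ | ⟨_, _, hle3, he⟩ | ⟨_, _, _, he⟩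
          · exact hj hj0
          · exact hnext (by rw [he]; exact ⟨by omega, h2⟩)
          · exact hnext (by rw [he]; simp only [psiMem, Prod.fst, Prod.snd]; omega)
          · exact hnext (by rw [he]; exact ⟨by omega, h2⟩)
end

section
/- Let $D_{i,c}$ and $D_{i,d}$ for columns $c < d$ denote the $\overline{\mathrm{lh}}^{-1}$-selection sequences for the entries $T_{i,c}$ and $T_{i,d}$ in row $i$ of a semistandard filling, as produced by the bijection $\Phi$. Abstractly: suppose $(x^{(n)}, \ldots, x^{(1)})$ and $(y^{(n)}, \ldots, y^{(1)})$ are two weakly decreasing sequences of values in $\mathbb{N} \cup \{\infty\}$ with the property that for every $k$ with $x^{(k)} < \infty$, there is a witness guaranteeing $y^{(k)} \geq x^{(k)} + 1$ (namely a singular string of size $x^{(k)}+1$ available when constructing $y$), and $y^{(k)} = \infty$ whenever $x^{(k)} = \infty$, where the selection of $y^{(k)}$ always picks a value $\geq y^{(k+1)}$ that is at least the size of any available singular string of size $\geq y^{(k+1)}$. Then $y^{(k)} > x^{(k)}$ for all $k$ with $x^{(k)} < \infty$. -/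
/-- Lemma B.2 ('same row'), abstracted.  `x` and `y` are two weakly decreasing
`lh⁻¹`-selection sequences (listed `x^{(n)},…,x^{(1)}`, so increasing in the
index `k`), with values in `ℕ∞`.  Whenever `x k` is finite, a singular string
of size `x k + 1` is available for the construction of `y` (`havail`), the
selection of `y k` dominates any available singular string of size
`≤ y (k+1)` (`hsel`), and `y k = ∞` wherever `x k = ∞`.  Then `y k > x k`
at every index where `x k` is finite. -/
theorem same_row_lemma (n : ℕ) (x y : ℕ → ℕ∞) (avail : ℕ → ℕ∞ → Prop)
    (hx : ∀ k, 1 ≤ k → k ≤ n → x k ≤ x (k + 1))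
    (hy : ∀ k, 1 ≤ k → k ≤ n → y k ≤ y (k + 1))
    (hinf : ∀ k, 1 ≤ k → k ≤ n → x k = ⊤ → y k = ⊤)
    (hxtop : x (n + 1) = ⊤) (hytop : y (n + 1) = ⊤)
    (havail : ∀ k, 1 ≤ k → k ≤ n → x k < ⊤ → avail k (x k + 1))
    (hsel : ∀ k s, 1 ≤ k → k ≤ n → avail k s → s ≤ y (k + 1) → s ≤ y k) :
    ∀ k, 1 ≤ k → k ≤ n → x k < ⊤ → x k < y k := by
  suffices H : ∀ m k, 1 ≤ k → k ≤ n → n - k < m → x k < ⊤ → x k < y k from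
    fun k hk1 hkn hfin => H (n - k + 1) k hk1 hkn (Nat.lt_succ_self _) hfin
  intro m
  induction m with
  | zero => intro k _ _ h; omega
  | succ m ih =>
    intro k hk1 hkn hlt hfin
    have hy1 : x k + 1 ≤ y (k + 1) := by
      rcases eq_or_lt_of_le (le_top : x (k + 1) ≤ ⊤) with htop | hfin'
      · have hy' : y (k + 1) = ⊤ := by
          rcases Nat.lt_or_ge n (k + 1) with h | h
          · have hkn' : k = n := by omega
            subst hkn'; exact hytop
          · exact hinf (k + 1) (by omega) h htop
        rw [hy']; exact le_top
      · have hk' : k + 1 ≤ n := by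
          by_contra h
          have hkn' : k = n := by omega
          subst hkn'
          rw [hxtop] at hfin'; exact lt_irrefl _ hfin'
        have h1 := ih (k + 1) (by omega) hk' (by omega) hfin'
        have h2 : x k ≤ x (k + 1) := hx k hk1 hkn
        calc x k + 1 ≤ x (k + 1) + 1 := by gcongr
          _ ≤ y (k + 1) := Order.add_one_le_of_lt h1
    have hle := hsel k (x k + 1) hk1 hkn (havail k hk1 hkn hfin) hy1
    exact lt_of_lt_of_le (ENat.lt_add_one_iff hfin.ne |>.mpr le_rfl) hle
end

section
/- Let $(I^{(n+1)}, \ldots, I^{(1)})$ be the rho-sequence of a rigged configuration rc whose sequence of rectangles begins $((1,1),(r-1,1),\ldots)$, and suppose: (i) for each $k < r$, rc$^{(k)}$ contains a singular string of size $1$; (ii) there exists $j \geq r$ such that, for some $d \geq 1$, all strings in rc$^{(j)}$ of length $\leq d$ are non-singular (so the minimal singular string at level $j$ has size $> 1$, i.e. $I^{(j)} > 1$). Since the rho-sequence is weakly increasing with decreasing $k$ (i.e., $I^{(k)} \geq I^{(k+1)}$), it follows that $I^{(k)} > 1$ for all $k \leq j$, in particular $I^{(k)} > 1$ for all $k < r$.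 Consequently, removing the singular strings of size $1$ from levels $k < r$ (the operation $\overline{\mathrm{lb}}^{-1}$) does not change the rho-sequence: the rho-sequence of $\overline{\mathrm{lb}}^{-1}(\mathrm{rc})$ equals that of rc. -/
/-- Lemma 5.1: the ρ̄-sequence is unchanged under `lb̄⁻¹`.  `sing k m` (resp.
`sing' k m`) means the `k`-th rigged partition of `rc` (resp. of `lb̄⁻¹(rc)`)
has a singular string of size `m`; `lb̄⁻¹` removes one singular string of size
`1` from each level `k < r`, so `sing'` agrees with `sing` at levels `≥ r` and
at sizes `> 1`, and `sing' ⊆ sing`.  `I` and `I'` are the ρ̄-sequences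
(selecting at each level the minimal singular string of size at least the
previous selection, starting with no constraint at level `n+1`).  If every
level `k < r` has a singular string of size `1`, and at some level `j ≥ r` all
strings of size `≤ d` (for some `d ≥ 1`) are non-singular, then `I k > 1` for
all `k ≤ j` — in particular for all `k < r` — and `I' = I`. -/
theorem rho_sequence_unchanged_under_lb_inv (n r : ℕ) (hr : 1 ≤ r)
    (hrn : r ≤ n + 1)
    (sing sing' : ℕ → ℕ → Prop) (I I' : ℕ → ℕ) (j d : ℕ)
    (hpos : ∀ k m, sing k m → 1 ≤ m)
    (hsub : ∀ k m, sing' k m → sing k m)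
    (hagree_high : ∀ k m, r ≤ k → (sing' k m ↔ sing k m))
    (hagree_big : ∀ k m, k < r → 1 < m → (sing' k m ↔ sing k m))
    (hones : ∀ k, 1 ≤ k → k < r → sing k 1)
    (hj : r ≤ j ∧ j ≤ n + 1 ∧ 1 ≤ d ∧ ∀ m, m ≤ d → ¬ sing j m)
    (hItop : I (n + 2) = 0) (hI'top : I' (n + 2) = 0)
    (hIsel : ∀ k, 1 ≤ k → k ≤ n + 1 →
      sing k (I k) ∧ I (k + 1) ≤ I k ∧
        ∀ m, sing k m → I (k + 1) ≤ m → I k ≤ m)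
    (hI'sel : ∀ k, 1 ≤ k → k ≤ n + 1 →
      sing' k (I' k) ∧ I' (k + 1) ≤ I' k ∧
        ∀ m, sing' k m → I' (k + 1) ≤ m → I' k ≤ m) :
    (∀ k, 1 ≤ k → k ≤ j → 1 < I k) ∧
    (∀ k, 1 ≤ k → k ≤ n + 1 → I' k = I k) := by

  obtain ⟨hrj, hjn, hd1, hnsing⟩ := hj
  have hIj : 1 < I j := by
    have h1j : 1 ≤ j := le_trans hr hrj
    obtain ⟨hs, -, -⟩ := hIsel j h1j hjn
    by_contra h
    push_neg at h
    exact hnsing (I j) (h.trans hd1) hs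
  have mono : ∀ a b, 1 ≤ a → a ≤ b → b ≤ n + 1 → I b ≤ I a := by
    intro a b ha hab hb
    induction b with
    | zero => omega
    | succ b ih =>
      rcases Nat.eq_or_lt_of_le hab with h | h
      · subst h; exact le_refl _
      · have hb' : b ≤ n + 1 := by omega
        have hab' : a ≤ b := by omega
        exact le_trans (hIsel b (le_trans ha hab') hb').2.1 (ih hab' hb')
  have part1 : ∀ k, 1 ≤ k → k ≤ j → 1 < I k := fun k hk hkj =>
    lt_of_lt_of_le hIj (mono k j hk hkj hjn)
  refine ⟨part1, ?_⟩
  have part2 : ∀ m, m ≤ n + 1 → I' (n + 2 - m) = I (n + 2 - m) := by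
    intro m
    induction m with
    | zero => intro _; simpa using hI'top.trans hItop.symm
    | succ m ih =>
      intro hm
      set k := n + 2 - (m + 1) with hk
      have hk1 : 1 ≤ k := by omega
      have hkn : k ≤ n + 1 := by omega
      have hnext : I' (k + 1) = I (k + 1) := by
        have hkeq : k + 1 = n + 2 - m := by omega
        rw [hkeq]; exact ih (by omega)
      obtain ⟨hs, hle, hmin⟩ := hIsel k hk1 hkn
      obtain ⟨hs', hle', hmin'⟩ := hI'sel k hk1 hkn
      have h1 : I k ≤ I' k := hmin _ (hsub _ _ hs') (by rw [← hnext]; exact hle')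
      have h2 : sing' k (I k) := by
        rcases le_or_gt r k with h | h
        · exact (hagree_high k (I k) h).mpr hs
        · exact (hagree_big k (I k) h (part1 k hk1 (by omega))).mpr hs
      have h3 : I' k ≤ I k := hmin' _ h2 (by rw [hnext]; exact hle)
      omega
  intro k hk hkn
  have := part2 (n + 2 - k) (by omega)
  have hkk : n + 2 - (n + 2 - k) = k := by omega
  rwa [hkk] at this
end
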